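/- arXiv:2501.07439 — 2 statements merged into one kernel-verified Lean document; each statement's English description precedes it below -/
import Mathlib

section
/- Let Ω ⊆ ℝ^d be a bounded set and let A_cl : Ω → ℝ^{d×d} be a matrix-valued function that is Lipschitz continuous in the operator 2-norm with constant L_cl > 0, i.e. ‖A_cl(x) − A_cl(y)‖ ≤ L_cl‖x − y‖ for all x, y ∈ Ω. Let α ∈ ℝ be an upper bound for the logarithmic norms, i.e. ⟨A_cl(x) z, z⟩ ≤ α‖z‖² for all x ∈ Ω and z ∈ ℝ^d, and let M = sup_{y ∈ Ω} ‖y‖. Then the vector field g(y) = A_cl(y) y satisfies the one-sided Lipschitz condition on Ω with constant L = α + L_cl · M, i.e. ⟨A_cl(x)x − A_cl(y)y, x − y⟩ ≤ (α + L_cl M)‖x − y‖² for all x, y ∈ Ω. -/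
open scoped RealInnerProductSpace

/-- The operator 2-norm of a real matrix (norm of the induced map on Euclidean space). -/
noncomputable def opNorm {d : ℕ} (M : Matrix (Fin d) (Fin d) ℝ) : ℝ :=
  ‖Matrix.toEuclideanCLM (𝕜 := ℝ) M‖

/-- Action of a matrix on Euclidean space. -/
noncomputable def mulVecE {d : ℕ} (M : Matrix (Fin d) (Fin d) ℝ)
    (x : EuclideanSpace ℝ (Fin d)) : EuclideanSpace ℝ (Fin d) :=
  Matrix.toEuclideanCLM (𝕜 := ℝ) M x

/-- If `A_cl` is Lipschitz in the operator norm on a bounded set `Ω` with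
constant `L_cl`, its logarithmic norms are bounded by `α` on `Ω`, and `M = sup_{y ∈ Ω} ‖y‖`,
then `g(y) = A_cl(y) y` is one-sided Lipschitz on `Ω` with constant `α + L_cl M`. -/
theorem closed_loop_one_sided_lipschitz {d : ℕ}
    (Ω : Set (EuclideanSpace ℝ (Fin d))) (hΩ : Bornology.IsBounded Ω)
    (Acl : EuclideanSpace ℝ (Fin d) → Matrix (Fin d) (Fin d) ℝ)
    (Lcl : ℝ) (hLcl : 0 < Lcl)
    (hlip : ∀ x ∈ Ω, ∀ y ∈ Ω, opNorm (Acl x - Acl y) ≤ Lcl * ‖x - y‖)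
    (α : ℝ)
    (hα : ∀ x ∈ Ω, ∀ z : EuclideanSpace ℝ (Fin d), ⟪mulVecE (Acl x) z, z⟫ ≤ α * ‖z‖ ^ 2)
    (M : ℝ) (hM : M = ⨆ y : Ω, ‖(y : EuclideanSpace ℝ (Fin d))‖) :
    ∀ x ∈ Ω, ∀ y ∈ Ω,
      ⟪mulVecE (Acl x) x - mulVecE (Acl y) y, x - y⟫ ≤ (α + Lcl * M) * ‖x - y‖ ^ 2 := by
  intro x hx y hy
  -- ‖y‖ ≤ M
  have hbdd : BddAbove (Set.range fun y : Ω => ‖(y : EuclideanSpace ℝ (Fin d))‖) := by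
    obtain ⟨C, hC⟩ := hΩ.subset_closedBall 0
    refine ⟨C, ?_⟩
    rintro _ ⟨⟨z, hz⟩, rfl⟩
    simpa [Metric.mem_closedBall, dist_eq_norm] using hC hz
  have hyM : ‖y‖ ≤ M := by
    rw [hM]
    exact le_ciSup hbdd ⟨y, hy⟩
  -- decompose
  have hdecomp : mulVecE (Acl x) x - mulVecE (Acl y) y
      = mulVecE (Acl x) (x - y) + mulVecE (Acl x - Acl y) y := by
    simp only [mulVecE, map_sub, ContinuousLinearMap.sub_apply, map_sub]
    abel
  rw [hdecomp, inner_add_left]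
  have h1 : ⟪mulVecE (Acl x) (x - y), x - y⟫ ≤ α * ‖x - y‖ ^ 2 := hα x hx (x - y)
  have h2 : ⟪mulVecE (Acl x - Acl y) y, x - y⟫ ≤ Lcl * M * ‖x - y‖ ^ 2 := by
    calc ⟪mulVecE (Acl x - Acl y) y, x - y⟫
        ≤ ‖mulVecE (Acl x - Acl y) y‖ * ‖x - y‖ := real_inner_le_norm _ _
      _ ≤ (opNorm (Acl x - Acl y) * ‖y‖) * ‖x - y‖ := by
          gcongr
          exact ContinuousLinearMap.le_opNorm _ _
      _ ≤ ((Lcl * ‖x - y‖) * M) * ‖x - y‖ := by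
          have hn : (0:ℝ) ≤ ‖x - y‖ := norm_nonneg _
          have hM0 : (0:ℝ) ≤ M := le_trans (norm_nonneg y) hyM
          have := hlip x hx y hy
          exact mul_le_mul (mul_le_mul this hyM (norm_nonneg _)
            (by positivity)) le_rfl hn (by positivity)
      _ = Lcl * M * ‖x - y‖ ^ 2 := by ring
  calc ⟪mulVecE (Acl x) (x - y), x - y⟫ + ⟪mulVecE (Acl x - Acl y) y, x - y⟫
      ≤ α * ‖x - y‖ ^ 2 + Lcl * M * ‖x - y‖ ^ 2 := add_le_add h1 h2
    _ = (α + Lcl * M) * ‖x - y‖ ^ 2 := by ring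
end

section
/- Let U : ℝ → ℝ^{N×r} and Z : ℝ → ℝ^{p×r} be differentiable matrix-valued functions, and set Y(t) = U(t) Z(t)ᵀ and C(t) = Z(t)ᵀ Z(t). Assume that for all t: U(t)ᵀ U(t) = I_r (orthonormal columns), U(t)ᵀ U'(t) = 0 (gauge condition), and C(t) is invertible. Then for all t: U'(t) = (I_N − U(t)U(t)ᵀ) Y'(t) Z(t) C(t)⁻¹ and Z'(t) = Y'(t)ᵀ U(t). -/
open Matrix

/-! Differentiating `Y = UZᵀ` entrywise gives `Y' = U'Zᵀ + UZ'ᵀ`. Multiplying by `Uᵀ` and using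
`UᵀU = I`, `UᵀU' = 0` isolates `Z'ᵀ = UᵀY'`; applying the projection `I - UUᵀ` removes the
`UZ'ᵀ` term and leaves `(I - UUᵀ)Y'Z = U'(ZᵀZ)`, which is solved for `U'`. -/

theorem Matrix.hasDerivAt_mul_apply {𝕜 𝔸 : Type*} [NontriviallyNormedField 𝕜] [NormedRing 𝔸]
    [NormedAlgebra 𝕜 𝔸] {m n o : Type*} [Fintype n]
    {A : 𝕜 → Matrix m n 𝔸} {B : 𝕜 → Matrix n o 𝔸} {A' : Matrix m n 𝔸} {B' : Matrix n o 𝔸} {t : 𝕜}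
    (hA : ∀ i j, HasDerivAt (fun s => A s i j) (A' i j) t)
    (hB : ∀ i j, HasDerivAt (fun s => B s i j) (B' i j) t) (i : m) (j : o) :
    HasDerivAt (fun s => (A s * B s) i j) ((A' * B t + A t * B') i j) t := by
  simp only [mul_apply, add_apply, ← Finset.sum_add_distrib]
  exact HasDerivAt.fun_sum fun k _ => (hA i k).mul (hB k j)

section Gauge

variable {R m n k : Type*} [CommRing R] [Fintype m] [Fintype n] [DecidableEq n]
  {U U' : Matrix m n R} {Z Z' : Matrix k n R}

theorem transpose_mul_tangent_eq (horth : Uᵀ * U = 1) (hgauge : Uᵀ * U' = 0) :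
    Uᵀ * (U' * Zᵀ + U * Z'ᵀ) = Z'ᵀ := by
  rw [Matrix.mul_add, ← Matrix.mul_assoc, ← Matrix.mul_assoc, hgauge, horth,
    Matrix.zero_mul, Matrix.one_mul, zero_add]

theorem tangent_transpose_mul_eq (horth : Uᵀ * U = 1) (hgauge : Uᵀ * U' = 0) :
    (U' * Zᵀ + U * Z'ᵀ)ᵀ * U = Z' := by
  simpa only [transpose_mul, transpose_transpose] using
    congrArg transpose (transpose_mul_tangent_eq (Z := Z) (Z' := Z') horth hgauge)

theorem one_sub_mul_transpose_mul_tangent_eq [DecidableEq m] (horth : Uᵀ * U = 1)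
    (hgauge : Uᵀ * U' = 0) :
    (1 - U * Uᵀ) * (U' * Zᵀ + U * Z'ᵀ) = U' * Zᵀ := by
  rw [Matrix.sub_mul, Matrix.one_mul, Matrix.mul_assoc, transpose_mul_tangent_eq horth hgauge,
    add_sub_cancel_right]

end Gauge

/-- The DLRA factor equations: if `Y = UZᵀ` with `UᵀU = I`, the gauge
condition `UᵀU' = 0`, and `C = ZᵀZ` invertible, then
`U' = (I − UUᵀ) Y' Z C⁻¹` and `Z' = Y'ᵀ U`. -/
theorem dlra_factor_equations {N r p : ℕ}
    (U U' : ℝ → Matrix (Fin N) (Fin r) ℝ)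
    (Z Z' : ℝ → Matrix (Fin p) (Fin r) ℝ)
    (Y' : ℝ → Matrix (Fin N) (Fin p) ℝ)
    (hU : ∀ (t : ℝ) (i : Fin N) (j : Fin r), HasDerivAt (fun s => U s i j) (U' t i j) t)
    (hZ : ∀ (t : ℝ) (i : Fin p) (j : Fin r), HasDerivAt (fun s => Z s i j) (Z' t i j) t)
    (hY : ∀ (t : ℝ) (i : Fin N) (j : Fin p),
      HasDerivAt (fun s => (U s * (Z s)ᵀ) i j) (Y' t i j) t)
    (horth : ∀ t : ℝ, (U t)ᵀ * U t = 1)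
    (hgauge : ∀ t : ℝ, (U t)ᵀ * U' t = 0)
    (hC : ∀ t : ℝ, IsUnit ((Z t)ᵀ * Z t)) :
    ∀ t : ℝ,
      U' t = (1 - U t * (U t)ᵀ) * Y' t * Z t * ((Z t)ᵀ * Z t)⁻¹ ∧
      Z' t = (Y' t)ᵀ * U t := by
  intro t
  have hY' : Y' t = U' t * (Z t)ᵀ + U t * (Z' t)ᵀ := by
    ext i j
    exact (hY t i j).unique
      (hasDerivAt_mul_apply (hU t) (B' := (Z' t)ᵀ) (fun i j => hZ t j i) i j)
  have hdet : IsUnit ((Z t)ᵀ * Z t).det := (isUnit_iff_isUnit_det _).mp (hC t)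
  refine ⟨?_, ?_⟩
  · rw [hY', one_sub_mul_transpose_mul_tangent_eq (horth t) (hgauge t), Matrix.mul_assoc,
      Matrix.mul_assoc, ← Matrix.mul_assoc (Z t)ᵀ, mul_nonsing_inv _ hdet, Matrix.mul_one]
  · rw [hY', tangent_transpose_mul_eq (horth t) (hgauge t)]
end
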